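/- Fix prior channel moments m2 > 0 and m4 > 0 (representing E[|h|²] and E[|h|⁴]). Then the MVU filter f_MVU = x/‖x‖² is a global minimizer of the zeroth-order excess MSE for the ZF equalizer with random channel: for every nonzero filter f ∈ ℂ^B, Me_rc(f_MVU) ≤ Me_rc(f). (Proposition 4: the MVU is an optimal channel estimator for minimizing [MSE_xe^rc(ZF)]_0.) -/

import Mathlib

open MeasureTheory

/-- `φ(f) = fᴴ x = Σᵢ conj(fᵢ)·xᵢ`. -/
noncomputable def phi {B : ℕ} (x f : Fin B → ℂ) : ℂ :=
  ∑ i, (starRingEnd ℂ) (f i) * x i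

/-- Squared Euclidean norm `‖f‖² = Σᵢ |fᵢ|²`. -/
noncomputable def nsq {B : ℕ} (f : Fin B → ℂ) : ℝ :=
  ∑ i, Complex.normSq (f i)

/-- Zeroth-order excess MSE of the ZF equalizer, random channel with prior
moments `m2 = E[|h|²]` and `m4 = E[|h|⁴]`. -/
noncomputable def MeRc {B : ℕ} (σx2 σw2 m2 m4 : ℝ) (x f : Fin B → ℂ) : ℝ :=
  (Complex.normSq (phi x f - 1) * (m4 * σx2 + m2 * σw2) +
      σw2 * nsq f * (m2 * σx2 + σw2)) /
    (m4 * Complex.normSq (phi x f) + m2 * σw2 * nsq f)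

/-- The MVU channel-estimating filter `f_MVU = x / ‖x‖²`. -/
noncomputable def fMVU {B : ℕ} (x : Fin B → ℂ) : Fin B → ℂ :=
  fun i => x i / (nsq x : ℂ)

/-!
The MVU filter satisfies `φ(f_MVU) = 1`, so its bias term `|φ - 1|²` vanishes, and
`Me_rc(f_MVU) = σw² (m2 σx² + σw²) / (m4 ‖x‖² + m2 σw²)`. For an arbitrary `f`, clearing the
denominators turns the claim into the nonnegativity of
`|φ(f) - 1|² (m4 σx² + m2 σw²) (m4 ‖x‖² + m2 σw²) + σw² (m2 σx² + σw²) m4 (‖f‖² ‖x‖² - |φ(f)|²)`,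
whose second summand is nonnegative by Cauchy–Schwarz.
-/

open scoped InnerProductSpace

section Coordinates

variable {B : ℕ}

lemma phi_eq_inner (x f : Fin B → ℂ) :
    phi x f = ⟪WithLp.toLp 2 f, WithLp.toLp 2 x⟫_ℂ := by
  simp only [phi, PiLp.inner_apply, RCLike.inner_apply']

lemma nsq_eq_norm_sq (f : Fin B → ℂ) : nsq f = ‖WithLp.toLp 2 f‖ ^ 2 := by
  simp only [nsq, EuclideanSpace.norm_sq_eq, Complex.sq_norm]

lemma nsq_pos {f : Fin B → ℂ} (hf : f ≠ 0) : 0 < nsq f := by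
  rw [nsq_eq_norm_sq]
  exact pow_pos (norm_pos_iff.2 fun h => hf (WithLp.toLp_injective 2 h)) 2

lemma normSq_phi_le (x f : Fin B → ℂ) : Complex.normSq (phi x f) ≤ nsq f * nsq x := by
  rw [← Complex.sq_norm, phi_eq_inner, nsq_eq_norm_sq, nsq_eq_norm_sq, ← mul_pow]
  exact pow_le_pow_left₀ (norm_nonneg _) (norm_inner_le_norm _ _) 2

lemma phi_fMVU {x : Fin B → ℂ} (hx : x ≠ 0) : phi x (fMVU x) = 1 := by
  have hP : (nsq x : ℂ) ≠ 0 := Complex.ofReal_ne_zero.2 (nsq_pos hx).ne'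
  simp only [phi, fMVU, map_div₀, Complex.conj_ofReal, div_mul_eq_mul_div,
    ← Complex.normSq_eq_conj_mul_self, ← Finset.sum_div]
  rw [← Complex.ofReal_sum]
  exact div_self hP

lemma nsq_fMVU (x : Fin B → ℂ) : nsq (fMVU x) = (nsq x)⁻¹ := by
  simp only [nsq, fMVU, Complex.normSq_div, Complex.normSq_ofReal, ← Finset.sum_div]
  simp

end Coordinates

section ExcessMSE

variable {B : ℕ} {σx2 σw2 m2 m4 : ℝ} {x : Fin B → ℂ}

lemma MeRc_fMVU (hx : x ≠ 0) :
    MeRc σx2 σw2 m2 m4 x (fMVU x) = σw2 * (m2 * σx2 + σw2) / (m4 * nsq x + m2 * σw2) := by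
  have hP : nsq x ≠ 0 := (nsq_pos hx).ne'
  rw [MeRc, phi_fMVU hx, nsq_fMVU, sub_self, Complex.normSq_zero, Complex.normSq_one,
    ← mul_div_mul_right _ _ hP]
  field_simp
  ring

lemma le_MeRc (hσx : 0 ≤ σx2) (hσw : 0 < σw2) (hm2 : 0 < m2) (hm4 : 0 ≤ m4) (hx : x ≠ 0)
    {f : Fin B → ℂ} (hf : f ≠ 0) :
    σw2 * (m2 * σx2 + σw2) / (m4 * nsq x + m2 * σw2) ≤ MeRc σx2 σw2 m2 m4 x f := by
  have hcs := normSq_phi_le x f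
  have hP := nsq_pos hx
  have hn := nsq_pos hf
  have hb := Complex.normSq_nonneg (phi x f)
  rw [MeRc, div_le_div_iff₀ (by positivity) (by positivity)]
  have hgap : 0 ≤ Complex.normSq (phi x f - 1) * (m4 * σx2 + m2 * σw2) *
      (m4 * nsq x + m2 * σw2) +
      σw2 * (m2 * σx2 + σw2) * m4 * (nsq f * nsq x - Complex.normSq (phi x f)) := by
    have ha := Complex.normSq_nonneg (phi x f - 1)
    exact add_nonneg (by positivity) (mul_nonneg (by positivity) (sub_nonneg.2 hcs))
  linear_combination hgap

end ExcessMSE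

theorem mvu_optimal_zeroth_order_excess_mse_rc_general
    (B : ℕ) (x : Fin B → ℂ) (hx : x ≠ 0)
    (σx2 σw2 : ℝ) (hσx : 0 < σx2) (hσw : 0 < σw2)
    (m2 m4 : ℝ) (hm2 : 0 < m2) (hm4 : 0 < m4) :
    ∀ f : Fin B → ℂ, f ≠ 0 →
      MeRc σx2 σw2 m2 m4 x (fMVU x) ≤ MeRc σx2 σw2 m2 m4 x f := fun _ hf => by
  rw [MeRc_fMVU hx]
  exact le_MeRc hσx.le hσw hm2 hm4.le hx hf

/-- Proposition 4: the MVU filter is a global minimizer of the zeroth-order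
excess MSE `[MSE_xe^rc(ZF)]₀` for a random channel. -/
theorem mvu_optimal_zeroth_order_excess_mse_rc
    (B : ℕ) (hB : 1 ≤ B) (x : Fin B → ℂ) (hx : x ≠ 0)
    (σx2 σw2 : ℝ) (hσx : 0 < σx2) (hσw : 0 < σw2)
    (m2 m4 : ℝ) (hm2 : 0 < m2) (hm4 : 0 < m4) :
    ∀ f : Fin B → ℂ, f ≠ 0 →
      MeRc σx2 σw2 m2 m4 x (fMVU x) ≤ MeRc σx2 σw2 m2 m4 x f :=
  mvu_optimal_zeroth_order_excess_mse_rc_general B x hx σx2 σw2 hσx hσw m2 m4 hm2 hm4
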